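/- arXiv:2007.10030 — 4 statements merged into one kernel-verified Lean document; each statement's English description precedes it below -/
import Mathlib

section
/- The distribution π_ω = ξ(1-ξ)^{β_ω} p_B(α_ω+1) (with α_ω = ω mod m, β_ω = ⌊ω/m⌋) satisfies the balance equations of the IRSA age Markov chain: π_ω = ξ·p_B(ω+1) for 0 ≤ ω < m, and π_ω = (1-ξ)·π_{ω-m} for ω ≥ m. -/
section BlockGeometric

variable {R : Type*} [CommMonoid R] (a c : R) (g : ℕ → R) {m ω : ℕ}

theorem mul_pow_div_mul_mod_of_lt (hω : ω < m) :
    a * c ^ (ω / m) * g (ω % m) = a * g ω := by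
  rw [Nat.div_eq_of_lt hω, Nat.mod_eq_of_lt hω, pow_zero, mul_one]

theorem mul_pow_div_mul_mod_of_le (hm : 0 < m) (hω : m ≤ ω) :
    a * c ^ (ω / m) * g (ω % m) = c * (a * c ^ ((ω - m) / m) * g ((ω - m) % m)) := by
  rw [Nat.div_eq_sub_div hm hω, ← Nat.mod_eq_sub_mod hω, pow_succ]
  ac_rfl

end BlockGeometric

theorem stationary_balance_general (m : ℕ) (hm : 1 ≤ m) (ξ : ℝ)
    (pB : ℕ → ℝ)
    (π : ℕ → ℝ) (hπ : ∀ ω, π ω = ξ * (1 - ξ) ^ (ω / m) * pB (ω % m + 1)) :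
    (∀ ω, ω < m → π ω = ξ * pB (ω + 1)) ∧
    (∀ ω, m ≤ ω → π ω = (1 - ξ) * π (ω - m)) := by
  refine ⟨fun ω hω => ?_, fun ω hω => ?_⟩
  · rw [hπ, mul_pow_div_mul_mod_of_lt ξ (1 - ξ) (fun α => pB (α + 1)) hω]
  · rw [hπ, hπ]
    exact mul_pow_div_mul_mod_of_le ξ (1 - ξ) (fun α => pB (α + 1)) hm hω

/-- The distribution π_ω = ξ(1-ξ)^{β_ω} p_B(α_ω+1) satisfies the balance equations
of the IRSA age Markov chain. -/
theorem stationary_balance (m : ℕ) (hm : 1 ≤ m) (ξ : ℝ) (hξ0 : 0 < ξ) (hξ1 : ξ < 1)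
    (pB : ℕ → ℝ)
    (π : ℕ → ℝ) (hπ : ∀ ω, π ω = ξ * (1 - ξ) ^ (ω / m) * pB (ω % m + 1)) :
    (∀ ω, ω < m → π ω = ξ * pB (ω + 1)) ∧
    (∀ ω, m ≤ ω → π ω = (1 - ξ) * π (ω - m)) :=
  stationary_balance_general m hm ξ pB π hπ
end

section
/- Let Ω have PMF π_ω = ξ(1-ξ)^{β_ω} p_B(α_ω+1) on ℕ with ξ ∈ (0,1), p_B(b) = ρ(1-ρ)^{b-1}/(1-(1-ρ)^m). Then for any integer θ' ≥ 0, P(Ω > θ') = ξ(1-ξ)^{β_{θ'}} · ((1-ρ)^{1+α_{θ'}} - (1-ρ)^m)/(1-(1-ρ)^m) + (1-ξ)^{1+β_{θ'}}, where α_{θ'} = θ' mod m, β_{θ'} = ⌊θ'/m⌋. -/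
/-!
Let `T n` (`IRSA.ageTail`) be the claimed closed form of `P(Ω > n)`. Within a block of `m`
consecutive values only the truncated-geometric factor changes, and when `n + 1` reaches a
multiple of `m` the leftover mass `(1 - ξ) ^ (1 + n / m)` pays for the first atom of the next
block; in both cases `T n - T (n + 1) = π (n + 1)`. Since `0 ≤ T n ≤ (1 - ξ) ^ (n / m) → 0`,
the tail sum telescopes to `T θ'`.
-/

open Filter Topology

theorem hasSum_sub_succ_of_antitone {f : ℕ → ℝ} {l : ℝ} (hf : Antitone f)
    (hl : Tendsto f atTop (𝓝 l)) : HasSum (fun n ↦ f n - f (n + 1)) (f 0 - l) := by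
  rw [hasSum_iff_tendsto_nat_of_nonneg (fun n ↦ sub_nonneg.2 (hf n.le_succ))]
  simp_rw [Finset.sum_range_sub']
  exact tendsto_const_nhds.sub hl

theorem Nat.succ_mod_of_not_dvd {n m : ℕ} (h : ¬m ∣ n + 1) : (n + 1) % m = n % m + 1 := by
  have hdiv := Nat.div_add_mod (n + 1) m
  rw [Nat.succ_div_of_not_dvd h] at hdiv
  have := Nat.div_add_mod n m
  omega

theorem Nat.mod_add_one_eq_of_dvd {n m : ℕ} (h : m ∣ n + 1) : n % m + 1 = m := by
  have hdiv := Nat.div_add_mod (n + 1) m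
  rw [Nat.succ_div_of_dvd h, Nat.mod_eq_zero_of_dvd h, mul_add] at hdiv
  have := Nat.div_add_mod n m
  have := Nat.mod_lt n (Nat.pos_of_dvd_of_pos h n.succ_pos)
  omega

theorem hasSum_ite_lt_iff {G : Type*} [AddCommGroup G] [TopologicalSpace G]
    [IsTopologicalAddGroup G] {f : ℕ → G} {a : G} (n : ℕ) :
    HasSum (fun ω ↦ if n < ω then f ω else 0) a ↔ HasSum (fun k ↦ f (k + (n + 1))) a := by
  rw [← hasSum_nat_add_iff' (n + 1), Finset.sum_eq_zero fun i hi ↦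
    if_neg (by simpa [Nat.lt_succ_iff] using hi), sub_zero]
  simp only [show ∀ k, n < k + (n + 1) by omega, if_true]

namespace IRSA

variable (ρ ξ : ℝ) (m : ℕ)

noncomputable def agePmf (ω : ℕ) : ℝ :=
  ξ * (1 - ξ) ^ (ω / m) * (ρ * (1 - ρ) ^ (ω % m) / (1 - (1 - ρ) ^ m))

noncomputable def ageTail (n : ℕ) : ℝ :=
  ξ * (1 - ξ) ^ (n / m) * ((1 - ρ) ^ (1 + n % m) - (1 - ρ) ^ m) / (1 - (1 - ρ) ^ m)
    + (1 - ξ) ^ (1 + n / m)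

variable {ρ ξ m}

theorem one_sub_one_sub_pow_pos (hρ0 : 0 < ρ) (hρ1 : ρ ≤ 1) (hm : m ≠ 0) :
    0 < 1 - (1 - ρ) ^ m :=
  sub_pos.2 (pow_lt_one₀ (sub_nonneg.2 hρ1) (by linarith) hm)

theorem ageTail_sub_succ (hD : 1 - (1 - ρ) ^ m ≠ 0) (n : ℕ) :
    ageTail ρ ξ m n - ageTail ρ ξ m (n + 1) = agePmf ρ ξ m (n + 1) := by
  unfold ageTail agePmf
  by_cases h : m ∣ n + 1
  · have hlast := Nat.mod_add_one_eq_of_dvd h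
    rw [Nat.succ_div_of_dvd h, Nat.mod_eq_zero_of_dvd h, add_comm 1 (n % m), hlast]
    field_simp
    ring
  · rw [Nat.succ_div_of_not_dvd h, Nat.succ_mod_of_not_dvd h]
    field_simp
    ring

theorem agePmf_nonneg (hρ0 : 0 < ρ) (hρ1 : ρ ≤ 1) (hξ0 : 0 ≤ ξ) (hξ1 : ξ ≤ 1) (hm : m ≠ 0)
    (ω : ℕ) : 0 ≤ agePmf ρ ξ m ω := by
  have := one_sub_one_sub_pow_pos hρ0 hρ1 hm
  have := sub_nonneg.2 hξ1
  have := sub_nonneg.2 hρ1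
  unfold agePmf
  positivity

theorem ageTail_nonneg (hρ0 : 0 < ρ) (hρ1 : ρ ≤ 1) (hξ0 : 0 ≤ ξ) (hξ1 : ξ ≤ 1) (hm : m ≠ 0)
    (n : ℕ) : 0 ≤ ageTail ρ ξ m n := by
  have := one_sub_one_sub_pow_pos hρ0 hρ1 hm
  have : 0 ≤ (1 - ρ) ^ (1 + n % m) - (1 - ρ) ^ m := sub_nonneg.2 <|
    pow_le_pow_of_le_one (by linarith) (by linarith) (by have := n.mod_lt hm.bot_lt; omega)
  have := sub_nonneg.2 hξ1
  unfold ageTail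
  positivity

theorem ageTail_le (hρ0 : 0 < ρ) (hρ1 : ρ ≤ 1) (hξ0 : 0 ≤ ξ) (hξ1 : ξ ≤ 1) (hm : m ≠ 0) (n : ℕ) :
    ageTail ρ ξ m n ≤ (1 - ξ) ^ (n / m) := by
  have hD := one_sub_one_sub_pow_pos hρ0 hρ1 hm
  have hw : ((1 - ρ) ^ (1 + n % m) - (1 - ρ) ^ m) / (1 - (1 - ρ) ^ m) ≤ 1 :=
    (div_le_one hD).2 <| by
      linarith [pow_le_one₀ (n := 1 + n % m) (sub_nonneg.2 hρ1) (by linarith : 1 - ρ ≤ 1)]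
  calc ageTail ρ ξ m n
      = (1 - ξ) ^ (n / m) * (ξ * (((1 - ρ) ^ (1 + n % m) - (1 - ρ) ^ m) / (1 - (1 - ρ) ^ m))
          + (1 - ξ)) := by unfold ageTail; ring
    _ ≤ (1 - ξ) ^ (n / m) * (ξ * 1 + (1 - ξ)) := by
      have := sub_nonneg.2 hξ1
      gcongr
    _ = (1 - ξ) ^ (n / m) := by ring

theorem tendsto_ageTail (hρ0 : 0 < ρ) (hρ1 : ρ ≤ 1) (hξ0 : 0 < ξ) (hξ1 : ξ ≤ 1) (hm : m ≠ 0) :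
    Tendsto (ageTail ρ ξ m) atTop (𝓝 0) :=
  squeeze_zero (ageTail_nonneg hρ0 hρ1 hξ0.le hξ1 hm) (ageTail_le hρ0 hρ1 hξ0.le hξ1 hm)
    ((tendsto_pow_atTop_nhds_zero_of_lt_one (by linarith) (by linarith)).comp
      (Nat.tendsto_div_const_atTop hm))

theorem hasSum_agePmf_tail (hρ0 : 0 < ρ) (hρ1 : ρ ≤ 1) (hξ0 : 0 < ξ) (hξ1 : ξ ≤ 1) (hm : m ≠ 0)
    (n : ℕ) : HasSum (fun ω ↦ if n < ω then agePmf ρ ξ m ω else 0) (ageTail ρ ξ m n) := by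
  have hD := (one_sub_one_sub_pow_pos hρ0 hρ1 hm).ne'
  have hanti : Antitone (ageTail ρ ξ m) := antitone_nat_of_succ_le fun k ↦
    sub_nonneg.1 ((ageTail_sub_succ hD k).symm ▸ agePmf_nonneg hρ0 hρ1 hξ0.le hξ1 hm (k + 1))
  have := hasSum_sub_succ_of_antitone (hanti.comp_monotone fun _ _ h ↦ Nat.add_le_add_right h n)
    ((tendsto_ageTail hρ0 hρ1 hξ0 hξ1 hm).comp (tendsto_add_atTop_nat n))
  simp only [Function.comp_apply, add_right_comm _ 1 n, ageTail_sub_succ hD, zero_add,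
    sub_zero] at this
  rwa [hasSum_ite_lt_iff]

end IRSA

/-- Tail probability of the IRSA stationary age offset distribution. -/
theorem irsa_tail_probability (ρ : ℝ) (m : ℕ) (hρ0 : 0 < ρ) (hρ1 : ρ < 1) (hm : 1 ≤ m)
    (ξ : ℝ) (hξ0 : 0 < ξ) (hξ1 : ξ < 1)
    (pB : ℕ → ℝ) (hpB : ∀ b, pB b = ρ * (1 - ρ) ^ (b - 1) / (1 - (1 - ρ) ^ m))
    (π : ℕ → ℝ) (hπ : ∀ ω, π ω = ξ * (1 - ξ) ^ (ω / m) * pB (ω % m + 1))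
    (θ' : ℕ) :
    (∑' ω : ℕ, if θ' < ω then π ω else 0)
      = ξ * (1 - ξ) ^ (θ' / m)
          * ((1 - ρ) ^ (1 + θ' % m) - (1 - ρ) ^ m) / (1 - (1 - ρ) ^ m)
        + (1 - ξ) ^ (1 + θ' / m) := by
  have hπ' : π = IRSA.agePmf ρ ξ m :=
    funext fun ω ↦ by rw [hπ, hpB, Nat.add_sub_cancel, IRSA.agePmf]
  rw [hπ']
  exact (IRSA.hasSum_agePmf_tail hρ0 hρ1.le hξ0 hξ1.le (by omega) θ').tsum_eq
end

section
/- In the bursty-traffic IRSA model with λ, σ ∈ (0,1) and P_l ∈ [0,1), the stationary probabilities satisfy Σ_{ℓ=0}^∞ π_ℓ^A = λ/(λ+σ) = p_A and Σ_{ℓ=0}^∞ (π_ℓ^S + π_ℓ^A) = 1, where (π_ℓ^S, π_ℓ^A)ᵀ = M^ℓ (σ(1-P_l)p_A, (1-σ)(1-P_l)p_A)ᵀ and M is the matrix with rows (1-λ, P_l σ), (λ, P_l(1-σ)). -/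
/-!
The column sums of `M` are `1` and `Pl`, so one step maps the total mass `πS + πA` to
`πS + Pl πA`: a fraction `1 - Pl` of `πA` leaves. As `M` and the initial vector are
nonnegative, so are all iterates, and telescoping bounds `(1 - Pl) Σ πA` by the initial
mass; `lam πS ℓ ≤ πA (ℓ + 1)` then bounds `Σ πS`.
The vector `s` of the two sums satisfies `s = v + M s`; this linear system gives
`s = (σ, lam) / (lam + σ)`.
-/

open Matrix Finset

namespace Matrix

variable {n R : Type*} [Fintype n] [DecidableEq n]

theorem pow_mulVec_nonneg [CommSemiring R] [PartialOrder R] [IsOrderedRing R]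
    {M : Matrix n n R} (hM : ∀ i j, 0 ≤ M i j) {v : n → R} (hv : 0 ≤ v) (k : ℕ) :
    0 ≤ (M ^ k) *ᵥ v := by
  induction k with
  | zero => simpa using hv
  | succ k ih =>
    rw [pow_succ', ← mulVec_mulVec]
    exact fun i => sum_nonneg fun j _ => mul_nonneg (hM i j) (ih j)

theorem eq_add_mulVec_of_hasSum_pow_mulVec [CommRing R] [TopologicalSpace R]
    [IsTopologicalRing R] [T2Space R] {M : Matrix n n R} {v s : n → R}
    (hs : HasSum (fun k => (M ^ k) *ᵥ v) s) :
    s = v + M *ᵥ s := by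
  have hshift : HasSum (fun k => (M ^ (k + 1)) *ᵥ v) (M *ᵥ s) := by
    simpa [Function.comp_def, pow_succ', ← mulVec_mulVec] using
      hs.map (mulVecLin M) (continuous_const.matrix_mulVec continuous_id)
  have hM_s : s - v = M *ᵥ s := by
    simpa only [sum_range_one, pow_zero, one_mulVec] using
      ((hasSum_nat_add_iff' 1).mpr hs).unique hshift
  rw [← hM_s, add_sub_cancel]

end Matrix

theorem summable_of_le_sub_succ {u g : ℕ → ℝ} (hg : ∀ k, 0 ≤ g k) (hu : ∀ k, 0 ≤ u k)
    (h : ∀ k, g k ≤ u k - u (k + 1)) : Summable g :=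
  summable_of_sum_range_le hg fun N =>
    calc ∑ k ∈ range N, g k ≤ ∑ k ∈ range N, (u k - u (k + 1)) := sum_le_sum fun k _ => h k
      _ = u 0 - u N := sum_range_sub' u N
      _ ≤ u 0 := sub_le_self _ (hu N)

def burstyMatrix (lam σ Pl : ℝ) : Matrix (Fin 2) (Fin 2) ℝ :=
  !![1 - lam, Pl * σ; lam, Pl * (1 - σ)]

section

variable {lam σ Pl : ℝ}

@[simp]
theorem burstyMatrix_mulVec_zero (x : Fin 2 → ℝ) :
    (burstyMatrix lam σ Pl *ᵥ x) 0 = (1 - lam) * x 0 + Pl * σ * x 1 := by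
  simp [burstyMatrix, mulVec, dotProduct]

@[simp]
theorem burstyMatrix_mulVec_one (x : Fin 2 → ℝ) :
    (burstyMatrix lam σ Pl *ᵥ x) 1 = lam * x 0 + Pl * (1 - σ) * x 1 := by
  simp [burstyMatrix, mulVec, dotProduct]

theorem burstyMatrix_nonneg (hlam0 : 0 ≤ lam) (hlam1 : lam ≤ 1) (hσ0 : 0 ≤ σ) (hσ1 : σ ≤ 1)
    (hPl0 : 0 ≤ Pl) (i j : Fin 2) : 0 ≤ burstyMatrix lam σ Pl i j := by
  fin_cases i <;> fin_cases j
  exacts [sub_nonneg.mpr hlam1, mul_nonneg hPl0 hσ0, hlam0, mul_nonneg hPl0 (sub_nonneg.mpr hσ1)]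

theorem summable_burstyMatrix_pow_mulVec (hlam0 : 0 < lam) (hlam1 : lam ≤ 1) (hσ0 : 0 ≤ σ)
    (hσ1 : σ ≤ 1) (hPl0 : 0 ≤ Pl) (hPl1 : Pl < 1) {v : Fin 2 → ℝ} (hv : 0 ≤ v) :
    Summable fun k => (burstyMatrix lam σ Pl ^ k) *ᵥ v := by
  set x := fun k => (burstyMatrix lam σ Pl ^ k) *ᵥ v
  have hx : ∀ k, 0 ≤ x k :=
    pow_mulVec_nonneg (burstyMatrix_nonneg hlam0.le hlam1 hσ0 hσ1 hPl0) hv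
  have hstep : ∀ k, x (k + 1) = burstyMatrix lam σ Pl *ᵥ x k := fun k => by
    simp only [x, pow_succ', mulVec_mulVec]
  have hx1 : Summable fun k => x k 1 := by
    refine (summable_mul_left_iff (sub_ne_zero.mpr hPl1.ne')).mp <|
      summable_of_le_sub_succ (u := fun k => x k 0 + x k 1)
        (fun k => mul_nonneg (sub_nonneg.mpr hPl1.le) (hx k 1))
        (fun k => add_nonneg (hx k 0) (hx k 1)) fun k => ?_
    simp only [hstep, burstyMatrix_mulVec_zero, burstyMatrix_mulVec_one]
    linarith
  have hx0 : Summable fun k => x k 0 := by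
    refine (summable_mul_left_iff hlam0.ne').mp <|
      ((summable_nat_add_iff 1).mpr hx1).of_nonneg_of_le
        (fun k => mul_nonneg hlam0.le (hx k 0)) fun k => ?_
    simp only [hstep, burstyMatrix_mulVec_one]
    linarith [mul_nonneg (mul_nonneg hPl0 (sub_nonneg.mpr hσ1)) (hx k 1)]
  exact Pi.summable.mpr <| Fin.forall_fin_two.mpr ⟨hx0, hx1⟩

theorem burstyMatrix_fixedPoint (hPl1 : Pl ≠ 1) {p : ℝ} {s : Fin 2 → ℝ}
    (h : s = ![σ * (1 - Pl) * p, (1 - σ) * (1 - Pl) * p] + burstyMatrix lam σ Pl *ᵥ s) :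
    s 1 = p ∧ lam * s 0 = σ * p := by
  have h0 := congrFun h 0
  have h1 := congrFun h 1
  simp only [Pi.add_apply, burstyMatrix_mulVec_zero, burstyMatrix_mulVec_one, cons_val_zero,
    cons_val_one] at h0 h1
  have hs1 : s 1 = p := by
    have : (1 - Pl) * (s 1 - p) = 0 := by linear_combination h0 + h1
    linarith [(mul_eq_zero.mp this).resolve_left (sub_ne_zero.mpr hPl1.symm)]
  exact ⟨hs1, by linear_combination h0 + Pl * σ * hs1⟩

end

/-- In the bursty-traffic IRSA model, Σ_ℓ π_ℓ^A = p_A and Σ_ℓ (π_ℓ^S + π_ℓ^A) = 1. -/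
theorem bursty_stationary_sums (lam σ Pl : ℝ) (hlam0 : 0 < lam) (hlam1 : lam < 1)
    (hσ0 : 0 < σ) (hσ1 : σ < 1) (hPl0 : 0 ≤ Pl) (hPl1 : Pl < 1)
    (pA : ℝ) (hpA : pA = lam / (lam + σ))
    (M : Matrix (Fin 2) (Fin 2) ℝ)
    (hM : M = !![1 - lam, Pl * σ; lam, Pl * (1 - σ)])
    (πS πA : ℕ → ℝ)
    (hπS : ∀ ℓ, πS ℓ = (M ^ ℓ).mulVec ![σ * (1 - Pl) * pA, (1 - σ) * (1 - Pl) * pA] 0)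
    (hπA : ∀ ℓ, πA ℓ = (M ^ ℓ).mulVec ![σ * (1 - Pl) * pA, (1 - σ) * (1 - Pl) * pA] 1) :
    (∑' ℓ : ℕ, πA ℓ) = pA ∧ (∑' ℓ : ℕ, (πS ℓ + πA ℓ)) = 1 := by
  obtain rfl : M = burstyMatrix lam σ Pl := hM
  set v : Fin 2 → ℝ := ![σ * (1 - Pl) * pA, (1 - σ) * (1 - Pl) * pA]
  have hpA0 : 0 ≤ pA := hpA ▸ by positivity
  have hv : 0 ≤ v := Fin.forall_fin_two.mpr
    ⟨mul_nonneg (mul_nonneg hσ0.le (sub_nonneg.mpr hPl1.le)) hpA0,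
      mul_nonneg (mul_nonneg (sub_nonneg.mpr hσ1.le) (sub_nonneg.mpr hPl1.le)) hpA0⟩
  have hsum := summable_burstyMatrix_pow_mulVec hlam0 hlam1.le hσ0.le hσ1.le hPl0 hPl1 hv
  obtain ⟨hs1, hs0⟩ :=
    burstyMatrix_fixedPoint hPl1.ne (eq_add_mulVec_of_hasSum_pow_mulVec hsum.hasSum)
  have hπS_summable : Summable πS := (funext hπS).symm ▸ Pi.summable.mp hsum 0
  have hπA_summable : Summable πA := (funext hπA).symm ▸ Pi.summable.mp hsum 1
  have hpA_mul : (lam + σ) * pA = lam := by rw [hpA]; field_simp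
  rw [hπS_summable.tsum_add hπA_summable]
  simp only [hπS, hπA, ← tsum_apply hsum]
  exact ⟨hs1, mul_left_cancel₀ hlam0.ne' (by linear_combination hs0 + lam * hs1 + hpA_mul)⟩
end

section
/- For the uniform stamp distribution p_B(b) = 1/m on {1,...,m} and per-frame success probability ξ = p_a(1-P_l) ∈ (0,1), the stationary distribution π_ω = ξ(1-ξ)^{⌊ω/m⌋}/m of the IRSA age offset chain satisfies Σ_{ω=0}^∞ π_ω = 1 and the corresponding average AoI equals Δ = 1 + 3m/2 + m(1-ξ)/ξ + (m-1)/2. -/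
/-!
Split the offset as `ω = q * m + r` with `r < m`: on each block of `m` consecutive offsets
`π` is constant, equal to `ξ (1 - ξ)^q / m`, so the block sums are `ξ (1 - ξ)^q` and
`ξ (1 - ξ)^q (q m + (m - 1) / 2)`. These are a geometric and an arithmetico-geometric series,
and since all terms are nonnegative the series over `ω` may be regrouped into blocks.
-/

open Finset

theorem hasSum_of_hasSum_blocks {m : ℕ} [NeZero m] {f : ℕ → ℝ} (hf : 0 ≤ f) {a : ℝ}
    (h : HasSum (fun q ↦ ∑ r : Fin m, f (q * m + r)) a) : HasSum f a := by
  rw [← (Nat.divModEquiv m).symm.hasSum_iff]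
  have hsum : Summable (f ∘ (Nat.divModEquiv m).symm) := by
    refine (summable_prod_of_nonneg fun _ ↦ hf _).2 ⟨fun _ ↦ Summable.of_finite, ?_⟩
    simp only [tsum_fintype]
    exact h.summable
  convert hsum.hasSum
  rw [hsum.tsum_prod, ← h.tsum_eq]
  simp only [tsum_fintype]
  rfl

theorem Fin.sum_univ_val_cast (m : ℕ) : ∑ r : Fin m, (r : ℝ) = m * (m - 1) / 2 := by
  induction m with
  | zero => simp
  | succ m ih =>
    rw [Fin.sum_univ_castSucc]
    simp only [Fin.val_castSucc, ih, Fin.val_last]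
    push_cast
    ring

theorem Nat.mul_add_fin_div {m : ℕ} (q : ℕ) (r : Fin m) : (q * m + r) / m = q := by
  rw [mul_comm, Nat.mul_add_div (Fin.pos r), Nat.div_eq_of_lt r.isLt, add_zero]

noncomputable def irsaStationary (m : ℕ) (ξ : ℝ) (ω : ℕ) : ℝ := ξ * (1 - ξ) ^ (ω / m) / m

variable {m : ℕ} {ξ : ℝ}

theorem irsaStationary_nonneg (hξ0 : 0 ≤ ξ) (hξ1 : ξ ≤ 1) : 0 ≤ irsaStationary m ξ := fun ω ↦ by
  unfold irsaStationary
  have : 0 ≤ 1 - ξ := by linarith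
  positivity

theorem irsaStationary_block (q : ℕ) (r : Fin m) :
    irsaStationary m ξ (q * m + r) = ξ * (1 - ξ) ^ q / m := by
  rw [irsaStationary, Nat.mul_add_fin_div]

theorem hasSum_irsaStationary [NeZero m] (hξ0 : 0 < ξ) (hξ1 : ξ < 1) :
    HasSum (irsaStationary m ξ) 1 := by
  have hm : (m : ℝ) ≠ 0 := Nat.cast_ne_zero.2 (NeZero.ne m)
  have hblock (q : ℕ) : ∑ r : Fin m, irsaStationary m ξ (q * m + r) = ξ * (1 - ξ) ^ q := by
    simp only [irsaStationary_block, sum_const, card_univ, Fintype.card_fin, nsmul_eq_mul]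
    field_simp
  have hgeom := (hasSum_geometric_of_lt_one (by linarith) (by linarith : 1 - ξ < 1)).mul_left ξ
  rw [sub_sub_cancel, mul_inv_cancel₀ hξ0.ne', ← funext hblock] at hgeom
  exact hasSum_of_hasSum_blocks (irsaStationary_nonneg hξ0.le hξ1.le) hgeom

theorem hasSum_mul_irsaStationary [NeZero m] (hξ0 : 0 < ξ) (hξ1 : ξ < 1) :
    HasSum (fun ω : ℕ ↦ ω * irsaStationary m ξ ω) (m * (1 - ξ) / ξ + (m - 1) / 2) := by
  have hm : (m : ℝ) ≠ 0 := Nat.cast_ne_zero.2 (NeZero.ne m)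
  have hx : ‖1 - ξ‖ < 1 := by rw [Real.norm_of_nonneg (by linarith)]; linarith
  have hblock (q : ℕ) : ∑ r : Fin m, ((q * m + r : ℕ) : ℝ) * irsaStationary m ξ (q * m + r) =
      m * ξ * (q * (1 - ξ) ^ q) + (m - 1) / 2 * (ξ * (1 - ξ) ^ q) := by
    simp only [irsaStationary_block, Nat.cast_add, Nat.cast_mul, add_mul, sum_add_distrib,
      ← sum_mul, Fin.sum_univ_val_cast, sum_const, card_univ, Fintype.card_fin, nsmul_eq_mul]
    field_simp
  have hgeom := (hasSum_geometric_of_lt_one (by linarith) (by linarith : 1 - ξ < 1)).mul_left ξ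
  have harith := (hasSum_coe_mul_geometric_of_norm_lt_one hx).mul_left (m * ξ)
  have hsum := harith.add (hgeom.mul_left (((m : ℝ) - 1) / 2))
  rw [← funext hblock] at hsum
  convert hasSum_of_hasSum_blocks (m := m)
    (fun ω ↦ mul_nonneg ω.cast_nonneg (irsaStationary_nonneg hξ0.le hξ1.le ω)) hsum using 1
  rw [sub_sub_cancel]
  field_simp

/-- For uniform stamp distribution p_B = 1/m, the IRSA stationary distribution
π_ω = ξ(1-ξ)^{⌊ω/m⌋}/m sums to 1 and gives average AoI Δ = 1 + 3m/2 + m(1-ξ)/ξ + (m-1)/2. -/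
theorem irsa_uniform_stamp (m : ℕ) (hm : 1 ≤ m) (ξ : ℝ) (hξ0 : 0 < ξ) (hξ1 : ξ < 1)
    (π : ℕ → ℝ) (hπ : ∀ ω, π ω = ξ * (1 - ξ) ^ (ω / m) / (m : ℝ)) :
    (∑' ω : ℕ, π ω) = 1 ∧
    1 + 3 * (m : ℝ) / 2 + ∑' ω : ℕ, (ω : ℝ) * π ω
      = 1 + 3 * (m : ℝ) / 2 + (m : ℝ) * (1 - ξ) / ξ + ((m : ℝ) - 1) / 2 := by
  have : NeZero m := ⟨by omega⟩
  obtain rfl : π = irsaStationary m ξ := funext hπ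
  rw [(hasSum_irsaStationary hξ0 hξ1).tsum_eq, (hasSum_mul_irsaStationary hξ0 hξ1).tsum_eq,
    add_assoc _ (_ / ξ)]
  exact ⟨rfl, rfl⟩
end
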